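/- arXiv:2602.10640 — 3 statements merged into one kernel-verified Lean document; each statement's English description precedes it below -/
import Mathlib

section
/- (Distortion bound.) Let P be a ranking distribution on S_n, d a metric on S_n, and 𝒫 a partition of S_n such that P(C) > 0 for every cell C ∈ 𝒫. Then for any consensus ranking distribution P_𝒫 = Σ_{C∈𝒫} P(C)·δ_{σ*_C} built from local medians σ*_C, one has W_d(P, P_𝒫) ≤ 𝓔_P(𝒫) := Σ_{C∈𝒫} P(C)·V(C) ≤ 2·𝓔'_P(𝒫) := 2·Σ_{C∈𝒫} P(C)·V'(C). -/
open Finset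
open scoped BigOperators Classical

noncomputable section

namespace CRD

/-- The symmetric group on `n` items. -/
abbrev Perm (n : ℕ) := Equiv.Perm (Fin n)

variable {n : ℕ}

/-- `d` is a metric on `α`. -/
def IsMetric {α : Type*} (d : α → α → ℝ) : Prop :=
  (∀ x y, 0 ≤ d x y) ∧ (∀ x y, d x y = 0 ↔ x = y) ∧
    (∀ x y, d x y = d y x) ∧ ∀ x y z, d x z ≤ d x y + d y z

/-- A ranking distribution: a probability distribution on the symmetric group. -/
def IsRankingDist (P : Perm n → ℝ) : Prop := (∀ σ, 0 ≤ P σ) ∧ ∑ σ, P σ = 1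

/-- Mass of a region `C ⊆ S_n` under `P`. -/
def mass (P : Perm n → ℝ) (C : Finset (Perm n)) : ℝ := ∑ σ ∈ C, P σ

/-- The ranking risk `L_P(σ) = E_{Σ ~ P}[d(Σ, σ)]`. -/
def riskL (d : Perm n → Perm n → ℝ) (P : Perm n → ℝ) (σ : Perm n) : ℝ := ∑ τ, P τ * d τ σ

/-- The variability `V_P = min_σ L_P(σ)`. -/
def V (d : Perm n → Perm n → ℝ) (P : Perm n → ℝ) : ℝ := ⨅ σ : Perm n, riskL d P σ

/-- The alternative dispersion `V'_P = (1/2) E[d(Σ, Σ')]`, `Σ, Σ'` i.i.d. with law `P`. -/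
def V' (d : Perm n → Perm n → ℝ) (P : Perm n → ℝ) : ℝ :=
  (1 / 2) * ∑ σ, ∑ τ, P σ * P τ * d σ τ

/-- The conditional law of `Σ ~ P` given `Σ ∈ C`. -/
def condDist (P : Perm n → ℝ) (C : Finset (Perm n)) : Perm n → ℝ :=
  fun σ => if σ ∈ C then P σ / mass P C else 0

/-- `σ` is a ranking median of `P` w.r.t. `d`: it minimizes the ranking risk. -/
def IsMedian (d : Perm n → Perm n → ℝ) (P : Perm n → ℝ) (σ : Perm n) : Prop :=
  ∀ τ, riskL d P σ ≤ riskL d P τ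

/-- The Dirac mass at `σ`. -/
def dirac (σ : Perm n) : Perm n → ℝ := fun τ => if τ = σ then 1 else 0

/-- `μ` is a coupling of `P` and `Q`. -/
def IsCoupling (P Q : Perm n → ℝ) (μ : Perm n → Perm n → ℝ) : Prop :=
  (∀ x y, 0 ≤ μ x y) ∧ (∀ x, ∑ y, μ x y = P x) ∧ ∀ y, ∑ x, μ x y = Q y

/-- The Wasserstein metric with cost `d`: infimum over couplings of `E[d(Σ, Σ')]`. -/
def W (d : Perm n → Perm n → ℝ) (P Q : Perm n → ℝ) : ℝ :=
  sInf {c : ℝ | ∃ μ, IsCoupling P Q μ ∧ c = ∑ x, ∑ y, μ x y * d x y}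

/-- `Pp` is a partition of `S_n` into (nonempty, pairwise disjoint, covering) cells. -/
def IsPartition (Pp : Finset (Finset (Perm n))) : Prop :=
  (∀ C ∈ Pp, C.Nonempty) ∧ (∀ C ∈ Pp, ∀ C' ∈ Pp, C ≠ C' → Disjoint C C') ∧
    Pp.sup id = Finset.univ

/-- The consensus ranking distribution `P_Pp = Σ_{C ∈ Pp} P(C) δ_{s C}`. -/
def CRDdist (P : Perm n → ℝ) (Pp : Finset (Finset (Perm n)))
    (s : Finset (Perm n) → Perm n) : Perm n → ℝ :=
  fun τ => ∑ C ∈ Pp, mass P C * dirac (s C) τ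

/-- `𝓔_P(Pp) = Σ_{C ∈ Pp} P(C) V(C)`. -/
def distortionE (d : Perm n → Perm n → ℝ) (P : Perm n → ℝ)
    (Pp : Finset (Finset (Perm n))) : ℝ :=
  ∑ C ∈ Pp, mass P C * V d (condDist P C)

/-- `𝓔'_P(Pp) = Σ_{C ∈ Pp} P(C) V'(C)`. -/
def distortionE' (d : Perm n → Perm n → ℝ) (P : Perm n → ℝ)
    (Pp : Finset (Finset (Perm n))) : ℝ :=
  ∑ C ∈ Pp, mass P C * V' d (condDist P C)

/-- The pairs `(i, j)` with `i < j`. -/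
def pairsLt (n : ℕ) : Finset (Fin n × Fin n) := Finset.univ.filter fun p => p.1 < p.2

/-- The Kendall tau distance: number of discordant pairs. -/
def kendall (σ σ' : Perm n) : ℝ :=
  ∑ p ∈ pairsLt n, if (σ p.1 < σ p.2 ↔ σ' p.1 < σ' p.2) then 0 else 1

/-- The pairwise marginal `p_{i,j} = P{Σ(i) < Σ(j)}`. -/
def pairProb (P : Perm n → ℝ) (i j : Fin n) : ℝ :=
  ∑ σ ∈ Finset.univ.filter (fun σ : Perm n => σ i < σ j), P σ

/-- Weak stochastic transitivity. -/
def IsWST (P : Perm n → ℝ) : Prop :=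
  ∀ i j k : Fin n, 1 / 2 ≤ pairProb P i j → 1 / 2 ≤ pairProb P j k → 1 / 2 ≤ pairProb P i k

/-- Strict stochastic transitivity. -/
def IsSST (P : Perm n → ℝ) : Prop :=
  IsWST P ∧ ∀ i j : Fin n, i < j → pairProb P i j ≠ 1 / 2

/-- `V''_P = Σ_{i<j} min(p_{i,j}, 1 - p_{i,j})`. -/
def V'' (P : Perm n → ℝ) : ℝ :=
  ∑ p ∈ pairsLt n, min (pairProb P p.1 p.2) (1 - pairProb P p.1 p.2)

/-- The ranking depth `D_P(σ) = max_{σ₁,σ₂} d(σ₁,σ₂) - L_P(σ)`. -/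
def depth (d : Perm n → Perm n → ℝ) (P : Perm n → ℝ) (σ : Perm n) : ℝ :=
  (⨆ p : Perm n × Perm n, d p.1 p.2) - riskL d P σ

/-- `‖d‖_∞ = max_{σ,σ'} d(σ,σ')`. -/
def dsup (d : Perm n → Perm n → ℝ) : ℝ := ⨆ p : Perm n × Perm n, d p.1 p.2

/-- The product (i.i.d.) weight of a sample `ω = (Σ_1, …, Σ_N)`. -/
def prodP (P : Perm n → ℝ) {N : ℕ} (ω : Fin N → Perm n) : ℝ := ∏ i, P (ω i)

/-- Probability of the event `E` under `N` i.i.d. draws from `P`. -/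
def probN (P : Perm n → ℝ) (N : ℕ) (E : (Fin N → Perm n) → Prop) : ℝ :=
  ∑ ω : Fin N → Perm n, if E ω then prodP P ω else 0

/-- `N_C`: number of sample points falling in `C`. -/
def Ncell {N : ℕ} (ω : Fin N → Perm n) (C : Finset (Perm n)) : ℕ :=
  (Finset.univ.filter fun i => ω i ∈ C).card

/-- Empirical cell frequency `P̂_N(C) = N_C / N`. -/
def Phat {N : ℕ} (ω : Fin N → Perm n) (C : Finset (Perm n)) : ℝ := (Ncell ω C : ℝ) / N

/-- The pairs `(i, j)` of sample indices with `i < j`. -/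
def pairsLtN (N : ℕ) : Finset (Fin N × Fin N) := Finset.univ.filter fun p => p.1 < p.2

/-- The empirical local variability `V̂'_N(C)`. -/
def Vhat' (d : Perm n → Perm n → ℝ) {N : ℕ} (ω : Fin N → Perm n)
    (C : Finset (Perm n)) : ℝ :=
  if 2 ≤ Ncell ω C then
    2 / ((Ncell ω C : ℝ) * ((Ncell ω C : ℝ) - 1)) *
      ∑ p ∈ pairsLtN N, if ω p.1 ∈ C ∧ ω p.2 ∈ C then d (ω p.1) (ω p.2) else 0
  else 0

/-- The plug-in empirical criterion `Ê'_N(Pp) = Σ_{C ∈ Pp} P̂_N(C) V̂'_N(C)`. -/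
def Ehat' (d : Perm n → Perm n → ℝ) {N : ℕ} (ω : Fin N → Perm n)
    (Pp : Finset (Finset (Perm n))) : ℝ :=
  ∑ C ∈ Pp, Phat ω C * Vhat' d ω C

/-- The symmetric kernel `Φ_Pp(σ,σ') = Σ_{C ∈ Pp} 1{(σ,σ') ∈ C×C}/P(C) · d(σ,σ')`. -/
def kernelPhi (d : Perm n → Perm n → ℝ) (P : Perm n → ℝ)
    (Pp : Finset (Finset (Perm n))) (σ σ' : Perm n) : ℝ :=
  ∑ C ∈ Pp, (if σ ∈ C ∧ σ' ∈ C then (1 : ℝ) else 0) / mass P C * d σ σ'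

/-- The degree-2 U-statistic `Ũ_N(Pp)` built on the kernel `Φ_Pp`. -/
def Ustat (d : Perm n → Perm n → ℝ) (P : Perm n → ℝ)
    (Pp : Finset (Finset (Perm n))) {N : ℕ} (ω : Fin N → Perm n) : ℝ :=
  2 / ((N : ℝ) * ((N : ℝ) - 1)) * ∑ p ∈ pairsLtN N, kernelPhi d P Pp (ω p.1) (ω p.2)

/-!
Sending every ranking of a cell `C` to the local median `σ*_C` is a coupling of `P` and
`P_𝒫`; its cost is `Σ_C P(C) L_{P_C}(σ*_C) = 𝓔_P(𝒫)`, which bounds the Wasserstein distance.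
For the second inequality, `V(C)` is at most the `P_C`-average of `L_{P_C}`, and that average
is `E[d(Σ, Σ')] = 2 V'(C)`.
-/

lemma V_le_riskL (d : Perm n → Perm n → ℝ) (Q : Perm n → ℝ) (σ : Perm n) :
    V d Q ≤ riskL d Q σ :=
  ciInf_le (Set.finite_range _).bddBelow σ

lemma IsMedian.riskL_eq_V {d : Perm n → Perm n → ℝ} {Q : Perm n → ℝ} {σ : Perm n}
    (h : IsMedian d Q σ) : riskL d Q σ = V d Q :=
  le_antisymm (le_ciInf h) (V_le_riskL d Q σ)

lemma condDist_isRankingDist {P : Perm n → ℝ} (hP : ∀ σ, 0 ≤ P σ)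
    {C : Finset (Perm n)} (hC : 0 < mass P C) : IsRankingDist (condDist P C) := by
  refine ⟨fun σ => ?_, ?_⟩
  · unfold condDist
    split_ifs
    exacts [div_nonneg (hP σ) hC.le, le_rfl]
  · simp only [condDist]
    rw [Finset.sum_ite_mem, Finset.univ_inter, ← Finset.sum_div]
    exact div_self hC.ne'

lemma mass_mul_riskL_condDist (d : Perm n → Perm n → ℝ) {P : Perm n → ℝ}
    {C : Finset (Perm n)} (hC : 0 < mass P C) (σ : Perm n) :
    mass P C * riskL d (condDist P C) σ = ∑ x ∈ C, P x * d x σ := by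
  simp only [riskL, condDist, ite_mul, zero_mul, Finset.sum_ite_mem, Finset.univ_inter,
    Finset.mul_sum]
  refine Finset.sum_congr rfl fun x _ => ?_
  field_simp

lemma sum_mul_riskL_eq_two_mul_V' (d : Perm n → Perm n → ℝ) (Q : Perm n → ℝ) :
    ∑ τ, Q τ * riskL d Q τ = 2 * V' d Q := by
  rw [V', ← mul_assoc, show (2 : ℝ) * (1 / 2) = 1 by norm_num, one_mul, Finset.sum_comm]
  simp only [riskL, Finset.mul_sum]
  exact Finset.sum_congr rfl fun _ _ => Finset.sum_congr rfl fun _ _ => by ring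

lemma V_le_two_mul_V' (d : Perm n → Perm n → ℝ) {Q : Perm n → ℝ} (hQ : IsRankingDist Q) :
    V d Q ≤ 2 * V' d Q :=
  calc V d Q = ∑ τ, Q τ * V d Q := by rw [← Finset.sum_mul, hQ.2, one_mul]
    _ ≤ ∑ τ, Q τ * riskL d Q τ :=
      Finset.sum_le_sum fun τ _ => mul_le_mul_of_nonneg_left (V_le_riskL d Q τ) (hQ.1 τ)
    _ = 2 * V' d Q := sum_mul_riskL_eq_two_mul_V' d Q

lemma distortionE_le_two_mul_distortionE' (d : Perm n → Perm n → ℝ) {P : Perm n → ℝ}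
    (hP : ∀ σ, 0 ≤ P σ) {Pp : Finset (Finset (Perm n))} (hpos : ∀ C ∈ Pp, 0 < mass P C) :
    distortionE d P Pp ≤ 2 * distortionE' d P Pp := by
  rw [distortionE, distortionE', Finset.mul_sum]
  refine Finset.sum_le_sum fun C hC => ?_
  rw [mul_left_comm]
  exact mul_le_mul_of_nonneg_left
    (V_le_two_mul_V' d (condDist_isRankingDist hP (hpos C hC))) (hpos C hC).le

lemma sum_dirac_mul (σ : Perm n) (f : Perm n → ℝ) : ∑ τ, dirac σ τ * f τ = f σ := by
  simp [dirac]

lemma IsPartition.sum_ite_mem {Pp : Finset (Finset (Perm n))} (hPp : IsPartition Pp)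
    (x : Perm n) (a : ℝ) : ∑ C ∈ Pp, (if x ∈ C then a else 0) = a := by
  obtain ⟨C₀, hC₀, hxC₀⟩ := Finset.mem_sup.1 (hPp.2.2 ▸ Finset.mem_univ x)
  rw [Finset.sum_eq_single_of_mem C₀ hC₀ fun C hC hne => if_neg fun hxC =>
    Finset.disjoint_left.1 (hPp.2.1 C hC C₀ hC₀ hne) hxC hxC₀]
  exact if_pos hxC₀

def cellCoupling (P : Perm n → ℝ) (Pp : Finset (Finset (Perm n)))
    (s : Finset (Perm n) → Perm n) : Perm n → Perm n → ℝ :=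
  fun x y => ∑ C ∈ Pp, (if x ∈ C then P x else 0) * dirac (s C) y

lemma isCoupling_cellCoupling {P : Perm n → ℝ} (hP : ∀ σ, 0 ≤ P σ)
    {Pp : Finset (Finset (Perm n))} (hPp : IsPartition Pp) (s : Finset (Perm n) → Perm n) :
    IsCoupling P (CRDdist P Pp s) (cellCoupling P Pp s) := by
  refine ⟨fun x y => ?_, fun x => ?_, fun y => ?_⟩
  · refine Finset.sum_nonneg fun C _ => mul_nonneg ?_ ?_
    · split_ifs
      exacts [hP x, le_rfl]
    · unfold dirac
      split_ifs <;> norm_num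
  · simp only [cellCoupling]
    rw [Finset.sum_comm]
    simpa [mul_comm _ (dirac _ _), sum_dirac_mul] using hPp.sum_ite_mem x (P x)
  · simp only [cellCoupling, CRDdist, mass]
    rw [Finset.sum_comm]
    simp only [← Finset.sum_mul, Finset.sum_ite_mem, Finset.univ_inter]

lemma cost_cellCoupling (d : Perm n → Perm n → ℝ) (P : Perm n → ℝ)
    (Pp : Finset (Finset (Perm n))) (s : Finset (Perm n) → Perm n) :
    ∑ x, ∑ y, cellCoupling P Pp s x y * d x y = ∑ C ∈ Pp, ∑ x ∈ C, P x * d x (s C) := by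
  simp only [cellCoupling, Finset.sum_mul, mul_assoc]
  refine (Finset.sum_congr rfl fun x _ => Finset.sum_comm).trans ?_
  simp only [← Finset.mul_sum, sum_dirac_mul]
  rw [Finset.sum_comm]
  simp only [ite_mul, zero_mul, Finset.sum_ite_mem, Finset.univ_inter]

lemma W_le_cost {d : Perm n → Perm n → ℝ} (hd : ∀ x y, 0 ≤ d x y) {P Q : Perm n → ℝ}
    {μ : Perm n → Perm n → ℝ} (hμ : IsCoupling P Q μ) :
    W d P Q ≤ ∑ x, ∑ y, μ x y * d x y := by
  refine csInf_le ⟨0, ?_⟩ ⟨μ, hμ, rfl⟩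
  rintro c ⟨μ', hμ', rfl⟩
  exact Finset.sum_nonneg fun x _ => Finset.sum_nonneg fun y _ =>
    mul_nonneg (hμ'.1 x y) (hd x y)

theorem distortion_bound_general {n : ℕ}
    (d : Perm n → Perm n → ℝ) (hd : IsMetric d)
    (P : Perm n → ℝ) (hP : IsRankingDist P)
    (Pp : Finset (Finset (Perm n))) (hPp : IsPartition Pp)
    (hpos : ∀ C ∈ Pp, 0 < mass P C)
    (s : Finset (Perm n) → Perm n)
    (hs : ∀ C ∈ Pp, IsMedian d (condDist P C) (s C)) :
    W d P (CRDdist P Pp s) ≤ distortionE d P Pp ∧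
      distortionE d P Pp ≤ 2 * distortionE' d P Pp := by
  refine ⟨?_, distortionE_le_two_mul_distortionE' d hP.1 hpos⟩
  calc W d P (CRDdist P Pp s)
      ≤ ∑ x, ∑ y, cellCoupling P Pp s x y * d x y :=
        W_le_cost hd.1 (isCoupling_cellCoupling hP.1 hPp s)
    _ = ∑ C ∈ Pp, ∑ x ∈ C, P x * d x (s C) := cost_cellCoupling d P Pp s
    _ = distortionE d P Pp := Finset.sum_congr rfl fun C hC => by
        rw [← mass_mul_riskL_condDist d (hpos C hC), (hs C hC).riskL_eq_V]

/-- Distortion bound: for any partition `Pp` of `S_n` with positive-mass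
cells and any consensus ranking distribution built from local medians,
`W_d(P, P_Pp) ≤ 𝓔_P(Pp) ≤ 2 𝓔'_P(Pp)`. -/
theorem distortion_bound {n : ℕ} (hn : 1 ≤ n)
    (d : Perm n → Perm n → ℝ) (hd : IsMetric d)
    (P : Perm n → ℝ) (hP : IsRankingDist P)
    (Pp : Finset (Finset (Perm n))) (hPp : IsPartition Pp)
    (hpos : ∀ C ∈ Pp, 0 < mass P C)
    (s : Finset (Perm n) → Perm n)
    (hs : ∀ C ∈ Pp, IsMedian d (condDist P C) (s C)) :
    W d P (CRDdist P Pp s) ≤ distortionE d P Pp ∧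
      distortionE d P Pp ≤ 2 * distortionE' d P Pp :=
  distortion_bound_general d hd P hP Pp hPp hpos s hs

end CRD
end
end

section
/- Let P be a ranking distribution on S_n, d a metric on S_n with ‖d‖_∞ = max_{σ,σ'} d(σ,σ'), and 𝒫 a partition of S_n with exactly K cells, each with P(C) > 0. Let σ_1,…,σ_N ∈ S_n be any sample such that N_C = #{k ≤ N : σ_k ∈ C} ≥ 2 for every C ∈ 𝒫. Then the plug-in and U-statistic versions of the empirical dispersion criterion satisfy the deterministic bound |Ẽ'_N(𝒫) − Ê'_N(𝒫)| ≤ K·‖d‖_∞ · max_{C∈𝒫} | (N−1)/(N_C−1) − 1/P(C) |. -/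
open Finset
open scoped BigOperators Classical

noncomputable section

namespace CRD

variable {n : ℕ}

lemma card_pairsLtN_mul_two (N : ℕ) : (pairsLtN N).card * 2 = N * (N - 1) := by
  classical
  have h : (pairsLtN N).card = ∑ j : Fin N, (j : ℕ) := by
    rw [pairsLtN, Finset.card_filter, ← Finset.univ_product_univ, Finset.sum_product_right]
    congr 1
    ext j
    rw [← Finset.card_filter]
    have : Finset.univ.filter (fun i : Fin N => i < j) = Finset.Iio j := by
      ext i; simp
    rw [this, Fin.card_Iio]
  rw [h, Fin.sum_univ_eq_sum_range (fun i => i) N]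
  simpa [mul_comm] using Finset.sum_range_id_mul_two N

/-- deterministic bound between the plug-in and U-statistic versions of
the empirical dispersion criterion:
`|Ẽ'_N(Pp) − Ê'_N(Pp)| ≤ K ‖d‖_∞ max_{C ∈ Pp} |(N−1)/(N_C−1) − 1/P(C)|`. -/
theorem plug_in_vs_ustat {n : ℕ} (hn : 1 ≤ n)
    (d : Perm n → Perm n → ℝ) (hd : IsMetric d)
    (P : Perm n → ℝ) (hP : IsRankingDist P)
    (Pp : Finset (Finset (Perm n))) (hPp : IsPartition Pp)
    {K : ℕ} (hcard : Pp.card = K)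
    (hpos : ∀ C ∈ Pp, 0 < mass P C)
    {N : ℕ} (ω : Fin N → Perm n)
    (hNC : ∀ C ∈ Pp, 2 ≤ Ncell ω C) :
    |Ustat d P Pp ω - Ehat' d ω Pp| ≤
      (K : ℝ) * dsup d *
        ⨆ C ∈ Pp, |((N : ℝ) - 1) / ((Ncell ω C : ℝ) - 1) - 1 / mass P C| := by

  classical
  have hdnn : ∀ x y, 0 ≤ d x y := hd.1
  have hdsup_ub : ∀ x y, d x y ≤ dsup d := by
    intro x y
    exact le_ciSup (f := fun p : Perm n × Perm n => d p.1 p.2)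
      (Set.Finite.bddAbove (Set.finite_range _)) (x, y)
  have hdsup0 : 0 ≤ dsup d := le_trans (hdnn 1 1) (hdsup_ub 1 1)
  set f : Finset (Perm n) → ℝ :=
    fun C => |((N : ℝ) - 1) / ((Ncell ω C : ℝ) - 1) - 1 / mass P C| with hf
  set M : ℝ := ⨆ C ∈ Pp, f C with hM
  set S : Finset (Perm n) → ℝ := fun C =>
    ∑ p ∈ pairsLtN N, if ω p.1 ∈ C ∧ ω p.2 ∈ C then d (ω p.1) (ω p.2) else 0 with hS
  rcases Finset.eq_empty_or_nonempty Pp with hemp | ⟨C0, hC0⟩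
  · subst hemp
    simp [Ustat, Ehat', kernelPhi, ← hcard]
  have hNcle : ∀ C, Ncell ω C ≤ N := by
    intro C
    calc Ncell ω C ≤ (Finset.univ : Finset (Fin N)).card := Finset.card_filter_le _ _
    _ = N := by simp
  have hN2 : 2 ≤ N := le_trans (hNC C0 hC0) (hNcle C0)
  have hNR : (2:ℝ) ≤ (N:ℝ) := by exact_mod_cast hN2
  have hN0 : (N:ℝ) ≠ 0 := by linarith
  have hN1 : (N:ℝ) - 1 ≠ 0 := by linarith
  have hNN1pos : 0 < (N:ℝ) * ((N:ℝ) - 1) := by nlinarith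
  have hMub : ∀ C ∈ Pp, f C ≤ M := by
    intro C hC
    have hbdd : BddAbove (Set.range fun C => ⨆ _ : C ∈ Pp, f C) :=
      Set.Finite.bddAbove (Set.finite_range _)
    calc f C = ⨆ _ : C ∈ Pp, f C := by rw [ciSup_pos hC]
    _ ≤ M := le_ciSup hbdd C
  have hM0 : 0 ≤ M := le_trans (abs_nonneg _) (hMub C0 hC0)
  have hSnn : ∀ C, 0 ≤ S C := by
    intro C
    apply Finset.sum_nonneg
    intro p _
    split <;> simp [hdnn]
  have hcard2 : ((pairsLtN N).card : ℝ) * 2 = (N:ℝ) * ((N:ℝ) - 1) := by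
    have h1 : 1 ≤ N := by omega
    rw [show (N:ℝ) - 1 = ((N - 1 : ℕ) : ℝ) from by rw [Nat.cast_sub h1]; simp]
    exact_mod_cast card_pairsLtN_mul_two N
  have hSle : ∀ C, S C ≤ ((pairsLtN N).card : ℝ) * dsup d := by
    intro C
    calc S C ≤ ∑ _p ∈ pairsLtN N, dsup d := by
          apply Finset.sum_le_sum
          intro p _
          split
          · exact hdsup_ub _ _
          · exact hdsup0
    _ = ((pairsLtN N).card : ℝ) * dsup d := by rw [Finset.sum_const, nsmul_eq_mul]
  have hU : Ustat d P Pp ω = ∑ C ∈ Pp, 2 / ((N:ℝ) * ((N:ℝ) - 1)) * (S C / mass P C) := by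
    rw [Ustat]
    unfold kernelPhi
    rw [Finset.sum_comm, Finset.mul_sum]
    refine Finset.sum_congr rfl fun C hC => ?_
    congr 1
    rw [hS]
    simp only
    rw [Finset.sum_div]
    refine Finset.sum_congr rfl fun p _ => ?_
    split <;> simp [div_mul_eq_mul_div, inv_mul_eq_div]
  have hNc2 : ∀ C ∈ Pp, (2:ℝ) ≤ (Ncell ω C : ℝ) := by
    intro C hC; exact_mod_cast hNC C hC
  have hE : ∀ C ∈ Pp, Phat ω C * Vhat' d ω C = 2 / ((N:ℝ) * ((Ncell ω C : ℝ) - 1)) * S C := by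
    intro C hC
    have hc2 := hNc2 C hC
    have h1 : (Ncell ω C : ℝ) ≠ 0 := by linarith
    have h2 : (Ncell ω C : ℝ) - 1 ≠ 0 := by linarith
    rw [Phat, Vhat', if_pos (hNC C hC)]
    rw [show (∑ p ∈ pairsLtN N, if ω p.1 ∈ C ∧ ω p.2 ∈ C then d (ω p.1) (ω p.2) else 0) = S C
      from by rw [hS]]
    field_simp
  have hdiff : Ustat d P Pp ω - Ehat' d ω Pp =
      ∑ C ∈ Pp, (2 * S C / ((N:ℝ) * ((N:ℝ) - 1))) *
        (1 / mass P C - ((N:ℝ) - 1) / ((Ncell ω C : ℝ) - 1)) := by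
    rw [hU, Ehat', ← Finset.sum_sub_distrib]
    refine Finset.sum_congr rfl fun C hC => ?_
    rw [hE C hC]
    have hc2 := hNc2 C hC
    have h2 : (Ncell ω C : ℝ) - 1 ≠ 0 := by linarith
    have hm : mass P C ≠ 0 := ne_of_gt (hpos C hC)
    field_simp
  rw [hdiff]
  calc |∑ C ∈ Pp, (2 * S C / ((N:ℝ) * ((N:ℝ) - 1))) *
        (1 / mass P C - ((N:ℝ) - 1) / ((Ncell ω C : ℝ) - 1))|
      ≤ ∑ C ∈ Pp, |(2 * S C / ((N:ℝ) * ((N:ℝ) - 1))) *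
        (1 / mass P C - ((N:ℝ) - 1) / ((Ncell ω C : ℝ) - 1))| :=
        Finset.abs_sum_le_sum_abs _ _
    _ ≤ ∑ _C ∈ Pp, dsup d * M := by
        apply Finset.sum_le_sum
        intro C hC
        rw [abs_mul]
        have ha0 : 0 ≤ 2 * S C / ((N:ℝ) * ((N:ℝ) - 1)) :=
          div_nonneg (by linarith [hSnn C]) (le_of_lt hNN1pos)
        have ha : |2 * S C / ((N:ℝ) * ((N:ℝ) - 1))| ≤ dsup d := by
          rw [abs_of_nonneg ha0, div_le_iff₀ hNN1pos]
          calc 2 * S C ≤ 2 * (((pairsLtN N).card : ℝ) * dsup d) := by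
                have := hSle C; linarith
          _ = dsup d * ((N:ℝ) * ((N:ℝ) - 1)) := by rw [← hcard2]; ring
        have hb : |1 / mass P C - ((N:ℝ) - 1) / ((Ncell ω C : ℝ) - 1)| ≤ M := by
          rw [abs_sub_comm]; exact hMub C hC
        exact mul_le_mul ha hb (abs_nonneg _) hdsup0
    _ = (K : ℝ) * dsup d * M := by
        rw [Finset.sum_const, nsmul_eq_mul, hcard]; ring


end CRD
end
end

section
/- Let P be a strictly stochastically transitive ranking distribution on S_n satisfying the low-noise condition NA(h) for some h ∈ (0,1/2), i.e. min_{i<j} |p_{i,j} − 1/2| ≥ h. Then the Kemeny variability of P (with d the Kendall tau distance) satisfies V_P ≤ (n(n−1)/2)·(1/2 − h). -/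
open Finset
open scoped BigOperators Classical

noncomputable section

namespace CRD

variable {n : ℕ}

section Aux

lemma pairProb_add {P : Perm n → ℝ} (hP : IsRankingDist P) {i j : Fin n} (hij : i ≠ j) :
    pairProb P i j + pairProb P j i = 1 := by
  have key : Finset.univ.filter (fun σ : Perm n => σ j < σ i)
      = Finset.univ.filter (fun σ : Perm n => ¬ σ i < σ j) := by
    apply Finset.filter_congr
    intro σ _
    have hne : σ i ≠ σ j := fun e => hij (σ.injective e)
    constructor
    · exact fun hlt => not_lt.2 hlt.le
    · intro hnlt
      exact lt_of_le_of_ne (not_lt.1 hnlt) (Ne.symm hne)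
  unfold pairProb
  rw [key, Finset.sum_filter_add_sum_filter_not, hP.2]

lemma pairProb_self (P : Perm n → ℝ) (i : Fin n) : pairProb P i i = 0 := by
  unfold pairProb
  have : Finset.univ.filter (fun σ : Perm n => σ i < σ i) = ∅ := by
    ext σ; simp
  rw [this, Finset.sum_empty]

lemma card_pairsLt_mul_two (n : ℕ) : (pairsLt n).card * 2 = n * (n - 1) := by
  have h1 : (pairsLt n).card = ∑ j : Fin n, (j : ℕ) := by
    unfold pairsLt
    rw [Finset.card_filter, Fintype.sum_prod_type_right]
    refine Finset.sum_congr rfl fun j _ => ?_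
    have : (Finset.univ.filter (fun i : Fin n => i < j)) = Finset.Iio j := by
      ext i; simp
    rw [← Finset.card_filter, this, Fin.card_Iio]
  rw [h1, Fin.sum_univ_eq_sum_range (fun i => i) n]
  exact Finset.sum_range_id_mul_two n

end Aux

/-- for a strictly stochastically transitive `P` satisfying the
low-noise condition `NA(h)`, the Kemeny variability satisfies
`V_P ≤ (n(n−1)/2)(1/2 − h)`. -/
theorem variability_low_noise {n : ℕ} (hn : 1 ≤ n)
    (P : Perm n → ℝ) (hP : IsRankingDist P) (hsst : IsSST P)
    (h : ℝ) (hh : h ∈ Set.Ioo (0 : ℝ) (1 / 2))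
    (hna : ∀ i j : Fin n, i < j → h ≤ |pairProb P i j - 1 / 2|) :
    V kendall P ≤ ((n : ℝ) * ((n : ℝ) - 1) / 2) * (1 / 2 - h) := by
  obtain ⟨hh0, hh2⟩ := hh
  have hP1 := hP.1
  set q : Fin n → Fin n → ℝ := fun i j => pairProb P i j with hqdef
  have hadd : ∀ {i j : Fin n}, i ≠ j → q i j + q j i = 1 := fun hij => pairProb_add hP hij
  have hne2 : ∀ {i j : Fin n}, i ≠ j → q i j ≠ 1 / 2 := by
    intro i j hij
    rcases lt_or_gt_of_ne hij with hlt | hlt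
    · intro e
      have := hna i j hlt
      rw [show q i j = pairProb P i j from rfl] at e
      rw [e] at this
      simp at this
      linarith
    · intro e
      have h2 := hna j i hlt
      have : q j i = 1 / 2 := by have := hadd hij; linarith
      rw [show q j i = pairProb P j i from rfl] at this
      rw [this] at h2
      simp at h2
      linarith
  -- the strict order
  set r : Fin n → Fin n → Prop := fun i j => 1 / 2 < q i j with hrdef
  have hirr : ∀ i, ¬ r i i := by
    intro i hri
    have h0 : q i i = 0 := pairProb_self P i
    have h1 : 1 / 2 < q i i := hri
    linarith
  have htot : ∀ {i j : Fin n}, i ≠ j → r i j ∨ r j i := by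
    intro i j hij
    rcases lt_trichotomy (q i j) (1 / 2) with hlt | heq | hgt
    · right; have := hadd hij; simp only [hrdef]; linarith
    · exact absurd heq (hne2 hij)
    · left; exact hgt
  have htrans : ∀ {i j k : Fin n}, r i j → r j k → r i k := by
    intro i j k hij hjk
    have hik : i ≠ k := by
      rintro rfl
      rcases eq_or_ne i j with rfl | hne
      · exact hirr i hij
      · have := hadd hne; simp only [hrdef] at hij hjk; linarith
    have h12 : 1 / 2 ≤ q i k := hsst.1 i j k hij.le hjk.le
    exact lt_of_le_of_ne h12 (Ne.symm (hne2 hik))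
  -- the rank function
  set g : Fin n → ℕ := fun i => (Finset.univ.filter (fun k => r k i)).card with hgdef
  have hg_lt : ∀ i, g i < n := by
    intro i
    have hss : Finset.univ.filter (fun k => r k i) ⊂ Finset.univ := by
      rw [Finset.ssubset_iff_of_subset (Finset.filter_subset _ _)]
      exact ⟨i, Finset.mem_univ i, by simp [hirr i]⟩
    simpa using Finset.card_lt_card hss
  have hmono : ∀ {i j : Fin n}, r i j → g i < g j := by
    intro i j hij
    apply Finset.card_lt_card
    rw [Finset.ssubset_iff_of_subset]
    · exact ⟨i, by simp [hij], by simp [hirr i]⟩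
    · intro k hk
      simp only [Finset.mem_filter, Finset.mem_univ, true_and] at hk ⊢
      exact htrans hk hij
  set σ0 : Fin n → Fin n := fun i => ⟨g i, hg_lt i⟩ with hσ0
  have hinj : Function.Injective σ0 := by
    intro i j hij'
    by_contra hne
    rcases htot hne with hr | hr
    · have := hmono hr
      have : g i = g j := congrArg Fin.val hij'
      omega
    · have := hmono hr
      have : g i = g j := congrArg Fin.val hij'
      omega
  set σ : Perm n := Equiv.ofBijective σ0 (Finite.injective_iff_bijective.mp hinj) with hσ
  have hσapp : ∀ i, σ i = σ0 i := fun i => rfl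
  have key : ∀ i j : Fin n, σ i < σ j ↔ r i j := by
    intro i j
    rw [hσapp, hσapp]
    constructor
    · intro hg
      by_contra hr
      rcases eq_or_ne i j with rfl | hne
      · exact lt_irrefl _ hg
      · rcases htot hne with h' | h'
        · exact hr h'
        · have := hmono h'
          have hg' : g i < g j := hg
          omega
    · intro hr
      exact hmono hr
  -- bound the risk at σ
  have hbound : ∀ p ∈ pairsLt n,
      (∑ τ : Perm n, P τ * (if (τ p.1 < τ p.2 ↔ σ p.1 < σ p.2) then (0:ℝ) else 1)) ≤ 1 / 2 - h := by
    intro p hp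
    have hplt : p.1 < p.2 := by simpa [pairsLt] using hp
    have hnep : p.1 ≠ p.2 := ne_of_lt hplt
    have hnaq := hna p.1 p.2 hplt
    by_cases hσp : σ p.1 < σ p.2
    · have hr : r p.1 p.2 := (key _ _).1 hσp
      have hsum : (∑ τ : Perm n, P τ * (if (τ p.1 < τ p.2 ↔ σ p.1 < σ p.2) then (0:ℝ) else 1))
          = pairProb P p.2 p.1 := by
        unfold pairProb
        rw [Finset.sum_filter]
        refine Finset.sum_congr rfl fun τ _ => ?_
        have hne : τ p.1 ≠ τ p.2 := fun e => hnep (τ.injective e)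
        by_cases hτ : τ p.1 < τ p.2
        · have : ¬ τ p.2 < τ p.1 := lt_asymm hτ
          simp [hτ, hσp, this]
        · have h21 : τ p.2 < τ p.1 := lt_of_le_of_ne (not_lt.1 hτ) (Ne.symm hne)
          simp [hτ, hσp, h21]
      rw [hsum]
      have habs : |q p.1 p.2 - 1 / 2| = q p.1 p.2 - 1 / 2 := abs_of_pos (by simpa [hrdef] using hr)
      have := hadd hnep
      simp only [hqdef] at this habs hnaq ⊢
      rw [habs] at hnaq
      linarith
    · have hr : ¬ r p.1 p.2 := fun hr => hσp ((key _ _).2 hr)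
      have hqlt : q p.1 p.2 < 1 / 2 :=
        lt_of_le_of_ne (not_lt.1 (by simpa [hrdef] using hr)) (hne2 hnep)
      have hsum : (∑ τ : Perm n, P τ * (if (τ p.1 < τ p.2 ↔ σ p.1 < σ p.2) then (0:ℝ) else 1))
          = pairProb P p.1 p.2 := by
        unfold pairProb
        rw [Finset.sum_filter]
        refine Finset.sum_congr rfl fun τ _ => ?_
        by_cases hτ : τ p.1 < τ p.2
        · simp [hτ, hσp]
        · simp [hτ, hσp]
      rw [hsum]
      have habs : |q p.1 p.2 - 1 / 2| = 1 / 2 - q p.1 p.2 := by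
        rw [abs_of_neg (by linarith)]; ring
      simp only [hqdef] at habs hnaq hqlt ⊢
      rw [habs] at hnaq
      linarith
  have hrisk : riskL kendall P σ ≤ ((pairsLt n).card : ℝ) * (1 / 2 - h) := by
    unfold riskL kendall
    calc ∑ τ : Perm n, P τ * ∑ p ∈ pairsLt n,
          (if (τ p.1 < τ p.2 ↔ σ p.1 < σ p.2) then (0:ℝ) else 1)
        = ∑ p ∈ pairsLt n, ∑ τ : Perm n,
            P τ * (if (τ p.1 < τ p.2 ↔ σ p.1 < σ p.2) then (0:ℝ) else 1) := by
          simp_rw [Finset.mul_sum]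
          rw [Finset.sum_comm]
      _ ≤ ∑ _p ∈ pairsLt n, (1 / 2 - h) := Finset.sum_le_sum hbound
      _ = ((pairsLt n).card : ℝ) * (1 / 2 - h) := by
          rw [Finset.sum_const, nsmul_eq_mul]
  have hcard : ((pairsLt n).card : ℝ) = (n : ℝ) * ((n : ℝ) - 1) / 2 := by
    have h2 := card_pairsLt_mul_two n
    have : ((pairsLt n).card : ℝ) * 2 = (n : ℝ) * ((n : ℝ) - 1) := by
      have := congrArg (fun m : ℕ => (m : ℝ)) h2
      push_cast [Nat.cast_sub hn] at this
      linarith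
    linarith
  have hV : V kendall P ≤ riskL kendall P σ :=
    ciInf_le (Finite.bddBelow_range _) σ
  rw [hcard] at hrisk
  linarith


end CRD
end
end
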